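/- arXiv:2308.13512 — 6 statements merged into one kernel-verified Lean document; each statement's English description precedes it below -/
import Mathlib

section
/- Let X_i ~ Ber(p_i, s_i) be independent scaled Bernoulli variables and P_i ~ Poi(ln(1/(1-p_i)), s̄_i) be independent scaled Poisson variables with s̄_i ≥ s_i for i = 1,...,m. If B = Σ X_i and P = Σ P_i, then P(B > 1) ≤ P(P > 1). -/
open MeasureTheory ProbabilityTheory
open scoped NNReal ENNReal

/-- Scaled Bernoulli distribution `Ber(p, s)`. -/
noncomputable def berS (p : ℝ) (hp : p ≤ 1) (s : ℝ) : PMF ℝ :=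
  (PMF.bernoulli (Real.toNNReal p) (Real.toNNReal_le_one.mpr hp)).map
    (fun b => if b then s else 0)

/-- Scaled Poisson distribution `Poi(λ, s)`: `s · Z` where `Z ~ Poisson(λ)`. -/
noncomputable def poiS (r : ℝ≥0) (s : ℝ) : PMF ℝ := (poissonPMF r).map (fun n => s * n)

/-- Convolution: distribution of the sum of independent discrete variables. -/
noncomputable def conv (X Y : PMF ℝ) : PMF ℝ := X.bind fun a => Y.map (fun b => a + b)

/-- Distribution of the sum of independent items. -/
noncomputable def pmfSum {m : ℕ} (f : Fin m → PMF ℝ) : PMF ℝ :=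
  (List.ofFn f).foldr conv (PMF.pure 0)

/-!
Dominance of all upper tails (`StochLE`) is preserved under sums of independent variables, so it
suffices to compare one Bernoulli summand with one Poisson summand. With rate
`r = ln (1 / (1 - p))` the Poisson variable is nonzero with probability `1 - e^{-r} = p`, and when
nonzero it is at least `s̄ ≥ s`; hence it dominates `Ber(p, s)`.
-/

open Set

set_option linter.deprecated false

lemma conv_comm (X Y : PMF ℝ) : conv X Y = conv Y X := by
  simp only [conv, PMF.map, Function.comp_def]
  rw [PMF.bind_comm]
  simp only [add_comm]

lemma toMeasure_conv_Ioi (X Y : PMF ℝ) (c : ℝ) :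
    (conv X Y).toMeasure (Ioi c) = ∑' a, X a * Y.toMeasure (Ioi (c - a)) := by
  simp only [PMF.toMeasure_apply_eq_toOuterMeasure, conv, PMF.toOuterMeasure_bind_apply,
    PMF.toOuterMeasure_map_apply, preimage_const_add_Ioi]

lemma pmfSum_succ {n : ℕ} (f : Fin (n + 1) → PMF ℝ) :
    pmfSum f = conv (f 0) (pmfSum fun i : Fin n => f i.succ) := by
  simp [pmfSum, List.ofFn_succ]

/-- First-order stochastic dominance of `X` by `Y`. -/
def StochLE (X Y : PMF ℝ) : Prop := ∀ c : ℝ, X.toMeasure (Ioi c) ≤ Y.toMeasure (Ioi c)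

namespace StochLE

variable {X Y Z X' Y' : PMF ℝ}

lemma trans (h : StochLE X Y) (h' : StochLE Y Z) : StochLE X Z := fun c => (h c).trans (h' c)

lemma conv_left (h : StochLE X Y) (Z : PMF ℝ) : StochLE (conv Z X) (conv Z Y) := fun c => by
  rw [toMeasure_conv_Ioi, toMeasure_conv_Ioi]
  exact ENNReal.tsum_le_tsum fun a => mul_le_mul_right (h _) _

lemma conv (h : StochLE X Y) (h' : StochLE X' Y') : StochLE (conv X X') (conv Y Y') := by
  have hY' := h.conv_left Y'
  rw [conv_comm Y' X, conv_comm Y' Y] at hY'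
  exact (h'.conv_left X).trans hY'

lemma pmfSum : ∀ {m : ℕ} {f g : Fin m → PMF ℝ}, (∀ i, StochLE (f i) (g i)) →
    StochLE (pmfSum f) (pmfSum g)
  | 0, _, _, _ => fun _ => le_rfl
  | _ + 1, f, g, h => by
    rw [pmfSum_succ f, pmfSum_succ g]
    exact (h 0).conv (pmfSum fun i => h i.succ)

end StochLE

lemma toMeasure_berS_Ioi_of_nonneg {p : ℝ} (hp : p ≤ 1) (s : ℝ) {c : ℝ} (hc : 0 ≤ c) :
    (berS p hp s).toMeasure (Ioi c) = if c < s then ENNReal.ofReal p else 0 := by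
  rw [PMF.toMeasure_apply_eq_toOuterMeasure, berS, PMF.toOuterMeasure_map_apply]
  split_ifs with hcs
  · have : (fun b : Bool => if b then s else 0) ⁻¹' Ioi c = {true} := by
      ext b; cases b <;> simp [hcs, hc]
    rw [this, PMF.toOuterMeasure_apply_singleton, PMF.bernoulli_apply]
    rfl
  · have : (fun b : Bool => if b then s else 0) ⁻¹' Ioi c = ∅ := by
      ext b; cases b <;> simp [hc, not_lt.mp hcs]
    simp [this]

lemma poiS_eq_map (r : ℝ≥0) (s : ℝ) : poiS r s = (poissonPMF r).map (fun n : ℕ => s * n) := by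
  -- in `poiS`, the PMF on `ℕ` is lifted to `ℝ` by the monad coercion `do let a ← _; pure ↑a`
  rw [poiS, show (do let a ← poissonPMF r; pure (a : ℝ)) = (poissonPMF r).map ((↑) : ℕ → ℝ) from rfl,
    PMF.map_comp]
  rfl

lemma poissonPMF_zero (r : ℝ≥0) : poissonPMF r 0 = ENNReal.ofReal (Real.exp (-r)) := by
  simp [← poissonPMFReal_ofReal_eq_poissonPMF, poissonPMFReal]

lemma poissonPMF_zero_of_rate_log {p : ℝ} (hp0 : 0 ≤ p) (hp1 : p < 1) :
    poissonPMF (Real.toNNReal (Real.log (1 / (1 - p)))) 0 = ENNReal.ofReal (1 - p) := by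
  have hlog : 0 ≤ Real.log (1 / (1 - p)) :=
    Real.log_nonneg (by rw [le_div_iff₀ (by linarith)]; linarith)
  rw [poissonPMF_zero, Real.coe_toNNReal _ hlog, one_div, Real.log_inv, neg_neg,
    Real.exp_log (by linarith)]

lemma toMeasure_poiS_Ioi_of_neg (r : ℝ≥0) {s c : ℝ} (hs : 0 ≤ s) (hc : c < 0) :
    (poiS r s).toMeasure (Ioi c) = 1 := by
  rw [PMF.toMeasure_apply_eq_toOuterMeasure, PMF.toOuterMeasure_apply_eq_one_iff, poiS_eq_map,
    PMF.support_map]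
  rintro _ ⟨n, -, rfl⟩
  exact hc.trans_le (by positivity)

lemma one_sub_poissonPMF_zero_le_toMeasure_poiS_Ioi (r : ℝ≥0) {s c : ℝ} (hc : 0 ≤ c)
    (hcs : c < s) : 1 - poissonPMF r 0 ≤ (poiS r s).toMeasure (Ioi c) := by
  have hpos : {0}ᶜ ⊆ (fun n : ℕ => s * n) ⁻¹' Ioi c := by
    intro n hn
    have : (1 : ℝ) ≤ n := by exact_mod_cast Nat.one_le_iff_ne_zero.mpr hn
    simp only [mem_preimage, mem_Ioi]
    nlinarith
  calc 1 - poissonPMF r 0 = (poissonPMF r).toMeasure {0}ᶜ := by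
        rw [prob_compl_eq_one_sub (measurableSet_singleton 0),
          PMF.toMeasure_apply_singleton _ _ (measurableSet_singleton 0)]
    _ ≤ (poissonPMF r).toMeasure ((fun n : ℕ => s * n) ⁻¹' Ioi c) := measure_mono hpos
    _ = (poiS r s).toMeasure (Ioi c) := by
        rw [PMF.toMeasure_apply_eq_toOuterMeasure, PMF.toMeasure_apply_eq_toOuterMeasure,
          poiS_eq_map, PMF.toOuterMeasure_map_apply]

lemma berS_stochLE_poiS {p s sbar : ℝ} (hp0 : 0 ≤ p) (hp1 : p < 1) (hs : 0 ≤ s)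
    (hsbar : s ≤ sbar) :
    StochLE (berS p hp1.le s) (poiS (Real.toNNReal (Real.log (1 / (1 - p)))) sbar) := by
  intro c
  rcases lt_or_ge c 0 with hc | hc
  · rw [toMeasure_poiS_Ioi_of_neg _ (hs.trans hsbar) hc]
    exact prob_le_one
  rw [toMeasure_berS_Ioi_of_nonneg _ _ hc]
  split_ifs with hcs
  · calc ENNReal.ofReal p = 1 - ENNReal.ofReal (1 - p) := by
          rw [← ENNReal.ofReal_one, ← ENNReal.ofReal_sub _ (by linarith)]
          ring_nf
      _ ≤ _ := by
          rw [← poissonPMF_zero_of_rate_log hp0 hp1]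
          exact one_sub_poissonPMF_zero_le_toMeasure_poiS_Ioi _ hc (hcs.trans_le hsbar)
  · exact zero_le

/-- If `Xᵢ ~ Ber(pᵢ, sᵢ)` independent and `Pᵢ ~ Poi(ln(1/(1-pᵢ)), s̄ᵢ)` independent
with `s̄ᵢ ≥ sᵢ`, `B = Σ Xᵢ`, `P = Σ Pᵢ`, then `ℙ(B > 1) ≤ ℙ(P > 1)`. -/
theorem stmt2 (m : ℕ) (p s sbar : Fin m → ℝ)
    (hp0 : ∀ i, 0 < p i) (hp1 : ∀ i, p i < 1) (hs : ∀ i, 0 < s i)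
    (hsbar : ∀ i, s i ≤ sbar i)
    (B P : PMF ℝ)
    (hB : B = pmfSum fun i => berS (p i) (hp1 i).le (s i))
    (hP : P = pmfSum fun i =>
      poiS (Real.toNNReal (Real.log (1 / (1 - p i)))) (sbar i)) :
    B.toMeasure {x | 1 < x} ≤ P.toMeasure {x | 1 < x} := by
  subst hB hP
  exact StochLE.pmfSum (fun i => berS_stochLE_poiS (hp0 i).le (hp1 i) (hs i).le (hsbar i)) 1
end

section
/- Let P_i ~ Poi(λ_i, s) be independent scaled Poisson variables all with the same scale s > 0. Then P(Σ_{i∈B} P_i > 1) ≤ α if and only if Σ_{i∈B} λ_i ≤ Q⁻¹(⌊1/s⌋ + 1, 1 - α), where Q(x, λ) denotes P(Poi(λ) < x), so that Q(⌊1/s⌋+1, λ) = P(Poi(λ) ≤ ⌊1/s⌋), and Q⁻¹(x, ·) is the inverse of Q(x, ·) in the second argument. -/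
open MeasureTheory ProbabilityTheory
open scoped NNReal ENNReal

/-- `Q(k, λ) = ℙ(Poisson(λ) < k) = ℙ(Poisson(λ) ≤ k - 1)`. -/
noncomputable def Q (k : ℕ) (r : ℝ≥0) : ℝ := ∑ n ∈ Finset.range k, poissonPMFReal r n

/-- Inverse of `Q(k, ·)` in the second argument: `Q⁻¹(k, β) = max {λ > 0 : Q(k, λ) ≥ β}`. -/
noncomputable def Qinv (k : ℕ) (β : ℝ) : ℝ :=
  sSup {r : ℝ | 0 < r ∧ β ≤ Q k (Real.toNNReal r)}

section Aux

open Real Filter Topology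

lemma poissonPMF_apply' (r : ℝ≥0) (n : ℕ) :
    poissonPMF r n = ENNReal.ofReal (poissonPMFReal r n) := rfl

lemma poisson_real_conv (a b : ℝ≥0) (k : ℕ) :
    ∑ i ∈ Finset.range (k+1), poissonPMFReal a i * poissonPMFReal b (k - i)
      = poissonPMFReal (a+b) k := by
  unfold poissonPMFReal
  push_cast
  have e : rexp (-((a:ℝ)+(b:ℝ))) = rexp (-(a:ℝ)) * rexp (-(b:ℝ)) := by
    rw [← exp_add]; ring_nf
  have h : ((a:ℝ) + b)^k = ∑ i ∈ Finset.range (k+1), (a:ℝ)^i * (b:ℝ)^(k-i) * (k.choose i) :=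
    add_pow (a:ℝ) b k
  rw [e, h, Finset.mul_sum, Finset.sum_div]
  refine Finset.sum_congr rfl fun i hi => ?_
  have hi' : i ≤ k := Finset.mem_range_succ_iff.mp hi
  have hfact : ((k.choose i : ℝ)) * i.factorial * (k-i).factorial = k.factorial := by
    exact_mod_cast Nat.choose_mul_factorial_mul_factorial hi'
  have h1 : (i.factorial : ℝ) ≠ 0 := Nat.cast_ne_zero.mpr i.factorial_ne_zero
  have h2 : ((k-i).factorial : ℝ) ≠ 0 := Nat.cast_ne_zero.mpr (k-i).factorial_ne_zero
  have h3 : (k.factorial : ℝ) ≠ 0 := Nat.cast_ne_zero.mpr k.factorial_ne_zero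
  field_simp
  linear_combination (- (a:ℝ)^i * (b:ℝ)^(k-i)) * hfact

lemma poissonPMF_conv (a b : ℝ≥0) :
    ((poissonPMF a).bind fun n => (poissonPMF b).map (fun m => n + m)) = poissonPMF (a + b) := by
  ext k
  rw [PMF.bind_apply]
  have hmap : ∀ n, ((poissonPMF b).map (fun m => n + m)) k
      = if n ≤ k then poissonPMF b (k - n) else 0 := by
    intro n
    rw [PMF.map_apply]
    split_ifs with h
    · rw [tsum_eq_single (k - n)]
      · rw [if_pos (by omega)]
      · intro m hm; rw [if_neg (by omega)]
    · exact ENNReal.tsum_eq_zero.mpr fun m => if_neg (by omega)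
  simp only [hmap]
  rw [tsum_eq_sum (s := Finset.range (k+1)) (by
    intro n hn
    rw [if_neg (by simpa using hn), mul_zero])]
  have : ∀ n ∈ Finset.range (k+1),
      poissonPMF a n * (if n ≤ k then poissonPMF b (k - n) else 0)
        = ENNReal.ofReal (poissonPMFReal a n * poissonPMFReal b (k - n)) := by
    intro n hn
    rw [if_pos (Finset.mem_range_succ_iff.mp hn), poissonPMF_apply', poissonPMF_apply',
      ← ENNReal.ofReal_mul poissonPMFReal_nonneg]
  rw [Finset.sum_congr rfl this, ← ENNReal.ofReal_sum_of_nonneg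
    (fun n _ => mul_nonneg poissonPMFReal_nonneg poissonPMFReal_nonneg),
    poisson_real_conv, poissonPMF_apply']

lemma poissonPMF_zero_s3 : poissonPMF 0 = PMF.pure 0 := by
  ext n
  rw [poissonPMF_apply']
  cases n <;> simp [poissonPMFReal, PMF.pure_apply]

lemma poiS_eq (r : ℝ≥0) (s : ℝ) :
    poiS r s = (poissonPMF r).map (fun n : ℕ => s * (n:ℝ)) := by
  show ((poissonPMF r).map Nat.cast).map (fun x : ℝ => s * x) = _
  rw [PMF.map_comp]
  rfl

lemma conv_poiS (a b : ℝ≥0) (s : ℝ) :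
    conv (poiS a s) (poiS b s) = poiS (a + b) s := by
  simp only [poiS_eq]
  unfold conv
  rw [PMF.bind_map, ← poissonPMF_conv a b, PMF.map_bind]
  refine congrArg _ (funext fun n => ?_)
  simp only [Function.comp, PMF.map_comp]
  congr 1
  funext m
  simp only [Function.comp]
  push_cast
  ring

lemma pmfSum_poiS : ∀ (m : ℕ) (lam : Fin m → ℝ≥0) (s : ℝ),
    pmfSum (fun i => poiS (lam i) s) = poiS (∑ i, lam i) s := by
  intro m
  induction m with
  | zero =>
    intro lam s
    unfold pmfSum
    simp [poiS_eq, poissonPMF_zero_s3, PMF.pure_map]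
  | succ m ih =>
    intro lam s
    have h : pmfSum (fun i => poiS (lam i) s)
        = conv (poiS (lam 0) s) (pmfSum (fun i : Fin m => poiS (lam i.succ) s)) := by
      unfold pmfSum
      rw [List.ofFn_succ]
      rfl
    rw [h, ih (fun i => lam i.succ) s, conv_poiS, ← Fin.sum_univ_succ]

noncomputable def Fq (k : ℕ) (x : ℝ) : ℝ :=
  ∑ n ∈ Finset.range k, Real.exp (-x) * x^n / n.factorial

lemma Q_eq_Fq (k : ℕ) (r : ℝ≥0) : Q k r = Fq k (r : ℝ) := rfl

lemma Q_toNNReal (k : ℕ) {x : ℝ} (hx : 0 ≤ x) : Q k (Real.toNNReal x) = Fq k x := by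
  rw [Q_eq_Fq, Real.coe_toNNReal x hx]

lemma Fq_continuous (k : ℕ) : Continuous (Fq k) := by
  unfold Fq
  fun_prop

lemma term_hasDerivAt (n : ℕ) (x : ℝ) :
    HasDerivAt (fun x => rexp (-x) * x^n / n.factorial)
      ((-rexp (-x) * x^n + rexp (-x) * (n * x^(n-1))) / n.factorial) x := by
  have h1 : HasDerivAt (fun x : ℝ => rexp (-x)) (-rexp (-x)) x := by
    have := (Real.hasDerivAt_exp (-x)).comp x (hasDerivAt_neg x)
    simp only [mul_neg, mul_one] at this
    exact this
  exact ((h1.mul (hasDerivAt_pow n x)).div_const _)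

lemma Fq_hasDerivAt (k : ℕ) (x : ℝ) :
    HasDerivAt (Fq (k+1)) (-(rexp (-x) * x^k / k.factorial)) x := by
  induction k with
  | zero =>
    have := term_hasDerivAt 0 x
    have he : Fq 1 = fun x => rexp (-x) * x^0 / Nat.factorial 0 := by
      funext y; simp [Fq]
    rw [he]
    convert this using 1
    simp
  | succ k ih =>
    have he : Fq (k+2) = fun y => Fq (k+1) y + rexp (-y) * y^(k+1) / (k+1).factorial := by
      funext y; rw [Fq, Finset.sum_range_succ]; rfl
    rw [he]
    refine (ih.add (term_hasDerivAt (k+1) x)).congr_deriv ?_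
    have hk : ((k+1).factorial : ℝ) = (k+1) * k.factorial := by
      rw [Nat.factorial_succ]; push_cast; ring
    have h1 : (k.factorial : ℝ) ≠ 0 := Nat.cast_ne_zero.mpr k.factorial_ne_zero
    have h2 : ((k+1).factorial : ℝ) ≠ 0 := Nat.cast_ne_zero.mpr (k+1).factorial_ne_zero
    rw [hk, Nat.add_sub_cancel]
    push_cast
    field_simp
    ring

lemma Fq_antitoneOn (k : ℕ) : AntitoneOn (Fq (k+1)) (Set.Ici 0) := by
  apply antitoneOn_of_deriv_nonpos (convex_Ici 0) (Fq_continuous (k+1)).continuousOn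
  · intro x _
    exact (Fq_hasDerivAt k x).differentiableAt.differentiableWithinAt
  · intro x hx
    rw [interior_Ici] at hx
    have hx' : (0:ℝ) < x := hx
    rw [(Fq_hasDerivAt k x).deriv]
    have : 0 ≤ rexp (-x) * x^k / k.factorial := by positivity
    linarith

lemma Fq_tendsto_atTop (k : ℕ) : Tendsto (Fq k) atTop (𝓝 0) := by
  have h : ∀ n : ℕ, Tendsto (fun x => rexp (-x) * x^n / n.factorial) atTop (𝓝 0) := by
    intro n
    have := (tendsto_pow_mul_exp_neg_atTop_nhds_zero n).div_const (n.factorial : ℝ)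
    rw [zero_div] at this
    refine this.congr fun x => ?_
    ring
  have := tendsto_finset_sum (Finset.range k) (fun n _ => h n)
  rw [Finset.sum_const_zero] at this
  exact this

lemma Fq_zero (k : ℕ) : Fq (k+1) 0 = 1 := by
  rw [Fq, Finset.sum_eq_single_of_mem 0 (by simp)]
  · simp
  · intro n _ hn
    simp [zero_pow hn]

lemma le_Qinv_iff (k : ℕ) {β : ℝ} (hβ0 : 0 < β) (hβ1 : β < 1) {L : ℝ} (hL : 0 ≤ L) :
    β ≤ Fq (k+1) L ↔ L ≤ Qinv (k+1) β := by
  have hSF : {r : ℝ | 0 < r ∧ β ≤ Q (k+1) (Real.toNNReal r)}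
      = {r : ℝ | 0 < r ∧ β ≤ Fq (k+1) r} := by
    ext r
    simp only [Set.mem_setOf_eq, and_congr_right_iff]
    intro hr
    rw [Q_toNNReal _ hr.le]
  rw [Qinv, hSF]
  set S := {r : ℝ | 0 < r ∧ β ≤ Fq (k+1) r} with hS
  have hne : S.Nonempty := by
    have ht : Tendsto (Fq (k+1)) (𝓝[>] 0) (𝓝 1) := by
      rw [← Fq_zero k]
      exact ((Fq_continuous (k+1)).continuousAt).continuousWithinAt
    have h1 : ∀ᶠ x in 𝓝[>] (0:ℝ), β < Fq (k+1) x := ht.eventually_const_lt hβ1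
    have h2 : ∀ᶠ x in 𝓝[>] (0:ℝ), x ∈ Set.Ioi (0:ℝ) := eventually_mem_nhdsWithin
    obtain ⟨x, hx1, hx2⟩ := (h1.and h2).exists
    exact ⟨x, hx2, hx1.le⟩
  have hbdd : BddAbove S := by
    obtain ⟨M, hM⟩ := eventually_atTop.mp ((Fq_tendsto_atTop (k+1)).eventually_lt_const hβ0)
    refine ⟨M, fun r hr => ?_⟩
    by_contra hMr
    exact absurd hr.2 (not_le.mpr (hM r (le_of_not_ge hMr)))
  have hsup_pos : 0 < sSup S := by
    obtain ⟨r, hr⟩ := hne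
    exact lt_of_lt_of_le hr.1 (le_csSup hbdd hr)
  have hsup : β ≤ Fq (k+1) (sSup S) := by
    have hcl : sSup S ∈ closure S := csSup_mem_closure hne hbdd
    have hclosed : IsClosed {x : ℝ | β ≤ Fq (k+1) x} :=
      isClosed_le continuous_const (Fq_continuous (k+1))
    have hsub : closure S ⊆ {x : ℝ | β ≤ Fq (k+1) x} :=
      hclosed.closure_subset_iff.mpr (fun r hr => hr.2)
    exact hsub hcl
  constructor
  · intro h
    rcases hL.eq_or_lt with h0 | h0
    · exact le_of_lt (h0 ▸ hsup_pos)
    · exact le_csSup hbdd ⟨h0, h⟩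
  · intro h
    calc β ≤ Fq (k+1) (sSup S) := hsup
    _ ≤ Fq (k+1) L := Fq_antitoneOn k hL hsup_pos.le h

lemma poiS_tail (r : ℝ≥0) {s : ℝ} (hs : 0 < s) :
    (poiS r s).toMeasure {x | 1 < x}
      = 1 - ENNReal.ofReal (Q (Nat.floor (1/s) + 1) r) := by
  set k := Nat.floor (1/s) with hk
  have hmeas : MeasurableSet {x : ℝ | 1 < x} := measurableSet_Ioi
  rw [poiS_eq, PMF.toMeasure_map_apply _ _ _ (by fun_prop) hmeas]
  have hset : (fun n : ℕ => s * (n:ℝ)) ⁻¹' {x | 1 < x}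
      = ((Finset.range (k+1) : Finset ℕ) : Set ℕ)ᶜ := by
    ext n
    simp only [Set.mem_preimage, Set.mem_setOf_eq, Set.mem_compl_iff, Finset.coe_range,
      Set.mem_Iio, not_lt]
    rw [hk]
    constructor
    · intro h
      have h1 : 1/s < (n:ℝ) := by
        rw [div_lt_iff₀ hs]
        linarith [mul_comm s (n:ℝ)]
      have := (Nat.floor_lt (by positivity : (0:ℝ) ≤ 1/s)).mpr h1
      omega
    · intro h
      have h1 : 1/s < (n:ℝ) := (Nat.floor_lt (by positivity : (0:ℝ) ≤ 1/s)).mp (by omega)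
      rw [div_lt_iff₀ hs] at h1
      linarith [mul_comm s (n:ℝ)]
  rw [hset]
  have : IsProbabilityMeasure (poissonPMF r).toMeasure :=
    PMF.toMeasure.isProbabilityMeasure (poissonPMF r)
  rw [measure_compl (Finset.range (k+1)).measurableSet (measure_ne_top _ _), measure_univ,
    PMF.toMeasure_apply_finset]
  congr 1
  have : ∀ n ∈ Finset.range (k+1),
      poissonPMF r n = ENNReal.ofReal (poissonPMFReal r n) := fun n _ => rfl
  rw [Finset.sum_congr rfl this,
    ← ENNReal.ofReal_sum_of_nonneg (fun n _ => poissonPMFReal_nonneg)]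
  rfl

end Aux

/-- Packing of scaled Poisson variables `Pᵢ ~ Poi(λᵢ, s)` is viable iff the packing of
their rates `λᵢ` respects the bin size `Q⁻¹(⌊1/s⌋ + 1, 1 - α)`:
`ℙ(Σᵢ Pᵢ > 1) ≤ α ↔ Σᵢ λᵢ ≤ Q⁻¹(⌊1/s⌋ + 1, 1 - α)`. -/
theorem stmt3 (m : ℕ) (lam : Fin m → ℝ≥0) (hlam : ∀ i, 0 < lam i)
    (s : ℝ) (hs : 0 < s) (α : ℝ) (hα0 : 0 < α) (hα1 : α < 1) :
    (pmfSum fun i => poiS (lam i) s).toMeasure {x | 1 < x} ≤ ENNReal.ofReal α ↔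
      ((∑ i, lam i : ℝ≥0) : ℝ) ≤ Qinv (Nat.floor (1 / s) + 1) (1 - α) := by
  rw [pmfSum_poiS m lam s, poiS_tail _ hs]
  set q := Q (Nat.floor (1/s) + 1) (∑ i, lam i) with hq
  have hq0 : 0 ≤ q := Finset.sum_nonneg fun n _ => poissonPMFReal_nonneg
  have hq1 : q ≤ 1 := sum_le_hasSum _ (fun n _ => poissonPMFReal_nonneg) (poissonPMFRealSum _)
  have key : (1 : ℝ≥0∞) - ENNReal.ofReal q ≤ ENNReal.ofReal α ↔ 1 - α ≤ q := by
    rw [tsub_le_iff_right, ← ENNReal.ofReal_add hα0.le hq0, ← ENNReal.ofReal_one,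
      ENNReal.ofReal_le_ofReal_iff (by positivity)]
    constructor <;> intro <;> linarith
  rw [key, hq, Q_eq_Fq]
  exact le_Qinv_iff (Nat.floor (1/s)) (by linarith) (by linarith) (∑ i, lam i).coe_nonneg
end

section
/- For every β ∈ [1/2, 1) and every natural number k ≥ 2, Q⁻¹(k, β) ≤ (k/(k+1))·Q⁻¹(k+1, β), where Q(s, λ) = Γ(s, λ)/Γ(s) is the regularized upper incomplete gamma function (equal to P(Poisson(λ) ≤ s−1) for integer s) and Q⁻¹(s, ·) is its inverse with respect to λ. -/
open ProbabilityTheory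
open scoped NNReal

/-!
Write `P(k, x) = ℙ(Poisson(x) < k)`. For `β ≥ 1/2`, every `λ` with `P(k, λ) ≥ β` satisfies
`λ ≤ k`, because `P(k, k) ≤ 1/2`: the Poisson(k) mass at `k - 1 - j` is at most the mass at
`k + j`. It therefore suffices to show `P(k, r) ≤ P(k + 1, (k + 1)/k · r)` for `r ∈ [0, k]`.
The difference `F(r)` of the two sides vanishes at `0` and is nonnegative at `k`, because
`P(k, k) ≤ P(k + 1, k + 1)`. Its derivative is a nonnegative factor times a decreasing function,
so `F` first increases and then decreases on `[0, k]`, and it is bounded below by its values at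
the endpoints.
-/

open Real Set Finset Nat

theorem factorial_le_pow_mul_factorial (n j : ℕ) :
    (n + 2 * j + 1)! ≤ (n + j + 1) ^ (2 * j + 1) * n ! := by
  induction j generalizing n with
  | zero => simp [Nat.factorial_succ]
  | succ j ih =>
    have amgm : (n + 2 * j + 3) * (n + 1) ≤ (n + j + 2) ^ 2 := by nlinarith
    calc (n + 2 * (j + 1) + 1)! = (n + 2 * j + 3) * ((n + 1) + 2 * j + 1)! := by
          rw [show n + 2 * (j + 1) + 1 = (n + 1 + 2 * j + 1) + 1 by ring, Nat.factorial_succ]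
          ring
      _ ≤ (n + 2 * j + 3) * ((n + j + 2) ^ (2 * j + 1) * (n + 1)!) := by
          gcongr; simpa only [show n + 1 + j + 1 = n + j + 2 by ring] using ih (n + 1)
      _ = (n + 2 * j + 3) * (n + 1) * ((n + j + 2) ^ (2 * j + 1) * n !) := by
          rw [Nat.factorial_succ]; ring
      _ ≤ (n + j + 2) ^ 2 * ((n + j + 2) ^ (2 * j + 1) * n !) := by gcongr
      _ = (n + (j + 1) + 1) ^ (2 * (j + 1) + 1) * n ! := by ring

theorem pow_div_factorial_le_pow_div_factorial (n j : ℕ) :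
    ((n + j + 1 : ℕ) : ℝ) ^ n / n ! ≤ ((n + j + 1 : ℕ) : ℝ) ^ (n + 2 * j + 1) / (n + 2 * j + 1)! := by
  rw [div_le_div_iff₀ (by positivity) (by positivity),
    show n + 2 * j + 1 = n + (2 * j + 1) by ring, pow_add, mul_assoc]
  gcongr
  exact_mod_cast factorial_le_pow_mul_factorial n j

noncomputable def poissonProbLT (k : ℕ) (x : ℝ) : ℝ := ∑ n ∈ range k, exp (-x) * x ^ n / n !

theorem Q_toNNReal_s10 {k : ℕ} {r : ℝ} (hr : 0 ≤ r) : Q k r.toNNReal = poissonProbLT k r := by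
  simp [Q, poissonProbLT, poissonPMFReal, Real.coe_toNNReal r hr]

theorem poissonProbLT_succ (k : ℕ) (x : ℝ) :
    poissonProbLT (k + 1) x = poissonProbLT k x + exp (-x) * x ^ k / k ! :=
  sum_range_succ _ _

theorem hasDerivAt_poissonProbLT_succ (k : ℕ) (x : ℝ) :
    HasDerivAt (poissonProbLT (k + 1)) (-(exp (-x) * x ^ k / k !)) x := by
  have hexp : HasDerivAt (fun y ↦ exp (-y)) (-exp (-x)) x := by
    simpa using (hasDerivAt_neg x).exp
  induction k with
  | zero => simpa [funext (poissonProbLT_succ 0), poissonProbLT] using hexp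
  | succ k ih =>
    rw [funext (poissonProbLT_succ (k + 1))]
    have hterm := (hexp.mul (hasDerivAt_pow (k + 1) x)).div_const ((k + 1)! : ℝ)
    refine (ih.add hterm).congr_deriv ?_
    rw [Nat.factorial_succ]
    push_cast
    field_simp
    ring

theorem strictAntiOn_poissonProbLT_succ (k : ℕ) : StrictAntiOn (poissonProbLT (k + 1)) (Ici 0) := by
  refine strictAntiOn_of_hasDerivWithinAt_neg (convex_Ici 0)
    (fun x _ ↦ (hasDerivAt_poissonProbLT_succ k x).continuousAt.continuousWithinAt)
    (fun x _ ↦ (hasDerivAt_poissonProbLT_succ k x).hasDerivWithinAt) fun x hx ↦ ?_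
  rw [interior_Ici] at hx
  have : 0 < exp (-x) * x ^ k / k ! := by have : 0 < x := hx; positivity
  linarith

theorem poissonProbLT_self_le_half (k : ℕ) : poissonProbLT k k ≤ 1 / 2 := by
  set p : ℕ → ℝ := fun n ↦ exp (-k) * (k : ℝ) ^ n / n.factorial
  have pair : ∀ j ∈ range k, p (k - 1 - j) ≤ p (k + j) := by
    intro j hj
    obtain ⟨n, rfl⟩ : ∃ n, k = n + j + 1 := ⟨k - 1 - j, by grind⟩
    rw [show n + j + 1 - 1 - j = n by omega, show n + j + 1 + j = n + 2 * j + 1 by ring]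
    simp only [p, mul_div_assoc]
    exact mul_le_mul_of_nonneg_left (pow_div_factorial_le_pow_div_factorial n j) (exp_pos _).le
  have total : ∑ n ∈ range (k + k), p n ≤ 1 := by
    simp only [p, mul_div_assoc, ← mul_sum]
    calc exp (-k) * ∑ n ∈ range (k + k), (k : ℝ) ^ n / n !
        ≤ exp (-k) * exp k := by gcongr; exact sum_le_exp_of_nonneg (by positivity) _
      _ = 1 := by rw [← exp_add, neg_add_cancel, exp_zero]
  rw [sum_range_add] at total
  have : poissonProbLT k k = ∑ n ∈ range k, p n := rfl
  linarith [sum_le_sum pair, sum_range_reflect p k]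

theorem le_of_half_le_poissonProbLT {k : ℕ} {x : ℝ} (hx : 0 ≤ x) (h : 1 / 2 ≤ poissonProbLT k x) :
    x ≤ k := by
  rcases k with _ | k
  · simp [poissonProbLT] at h; linarith
  by_contra! hlt
  have := strictAntiOn_poissonProbLT_succ k (mem_Ici.2 (Nat.cast_nonneg _)) (mem_Ici.2 hx) hlt
  linarith [poissonProbLT_self_le_half (k + 1)]

theorem exp_neg_mul_pow_le (k : ℕ) {t : ℝ} (ht : 0 ≤ t) : exp (-t) * t ^ k ≤ exp (-k) * k ^ k := by
  rcases k.eq_zero_or_pos with rfl | hk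
  · simpa using ht
  have hk : (0 : ℝ) < k := Nat.cast_pos.2 hk
  calc exp (-t) * t ^ k = (t / k * exp (-(t / k))) ^ k * k ^ k := by
        rw [mul_pow, ← exp_nat_mul, div_pow]; field_simp
    _ ≤ exp (-1) ^ k * k ^ k := by
        gcongr
        exact mul_exp_neg_le_exp_neg_one _
    _ = exp (-k) * k ^ k := by rw [← exp_nat_mul]; ring_nf

theorem poissonProbLT_self_le_succ (k : ℕ) :
    poissonProbLT k k ≤ poissonProbLT (k + 1) (k + 1) := by
  set p : ℝ := exp (-k) * (k : ℝ) ^ k / k.factorial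
  have hφ : ∀ t : ℝ, HasDerivAt (fun t ↦ poissonProbLT (k + 1) t + t * p)
      (-(exp (-t) * t ^ k / k !) + p) t := fun t ↦
    (hasDerivAt_poissonProbLT_succ k t).add (by simpa using (hasDerivAt_id t).mul_const p)
  -- the decrease rate `exp (-t) * t ^ k / k !` is largest at `t = k`, where it equals `p`
  have hmono : MonotoneOn (fun t ↦ poissonProbLT (k + 1) t + t * p) (Ici 0) := by
    refine monotoneOn_of_hasDerivWithinAt_nonneg (convex_Ici 0)
      (fun t _ ↦ (hφ t).continuousAt.continuousWithinAt) (fun t _ ↦ (hφ t).hasDerivWithinAt)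
      fun t ht ↦ ?_
    rw [interior_Ici] at ht
    have : exp (-t) * t ^ k / k ! ≤ p :=
      div_le_div_of_nonneg_right (exp_neg_mul_pow_le k (le_of_lt ht)) (by positivity)
    linarith
  have h : poissonProbLT (k + 1) k + k * p ≤ poissonProbLT (k + 1) (k + 1) + (k + 1) * p :=
    hmono (mem_Ici.2 k.cast_nonneg) (mem_Ici.2 (by positivity)) (by linarith)
  rw [poissonProbLT_succ k (k : ℝ)] at h
  linarith

theorem monotoneOn_mul_exp_neg_div {K : ℝ} (hK : 0 < K) :
    MonotoneOn (fun t ↦ t * exp (-(t / K))) (Iic K) := by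
  have hd : ∀ t, HasDerivAt (fun t ↦ t * exp (-(t / K))) ((1 - t / K) * exp (-(t / K))) t := by
    intro t
    refine ((hasDerivAt_id' t).fun_mul ((hasDerivAt_id' t).div_const K).fun_neg.exp).congr_deriv ?_
    ring
  refine monotoneOn_of_hasDerivWithinAt_nonneg (convex_Iic K)
    (fun t _ ↦ (hd t).continuousAt.continuousWithinAt) (fun t _ ↦ (hd t).hasDerivWithinAt)
    fun t ht ↦ ?_
  rw [interior_Iic] at ht
  have : t / K ≤ 1 := (div_le_one hK).2 (le_of_lt ht)
  have := exp_pos (-(t / K))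
  nlinarith

theorem min_le_of_hasDerivAt_mul_antitoneOn {f w g : ℝ → ℝ} {a b x : ℝ}
    (hf : ∀ t, HasDerivAt f (w t * g t) t) (hw : ∀ t ∈ Icc a b, 0 ≤ w t)
    (hg : AntitoneOn g (Icc a b)) (hx : x ∈ Icc a b) : min (f a) (f b) ≤ f x := by
  have hfc : ∀ s, ContinuousOn f s := fun s t _ ↦ (hf t).continuousAt.continuousWithinAt
  rcases le_or_gt 0 (g x) with hgx | hgx
  · have : MonotoneOn f (Icc a x) := by
      refine monotoneOn_of_hasDerivWithinAt_nonneg (convex_Icc a x) (hfc _)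
        (fun t _ ↦ (hf t).hasDerivWithinAt) fun t ht ↦ ?_
      rw [interior_Icc] at ht
      have ht' : t ∈ Icc a b := ⟨ht.1.le, ht.2.le.trans hx.2⟩
      exact mul_nonneg (hw t ht') (hgx.trans (hg ht' hx ht.2.le))
    exact (min_le_left _ _).trans (this (left_mem_Icc.2 hx.1) (right_mem_Icc.2 hx.1) hx.1)
  · have : AntitoneOn f (Icc x b) := by
      refine antitoneOn_of_hasDerivWithinAt_nonpos (convex_Icc x b) (hfc _)
        (fun t _ ↦ (hf t).hasDerivWithinAt) fun t ht ↦ ?_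
      rw [interior_Icc] at ht
      have ht' : t ∈ Icc a b := ⟨hx.1.trans ht.1.le, ht.2.le⟩
      exact mul_nonpos_of_nonneg_of_nonpos (hw t ht') ((hg hx ht' ht.1.le).trans hgx.le)
    exact (min_le_right _ _).trans (this (left_mem_Icc.2 hx.2) (right_mem_Icc.2 hx.2) hx.2)

theorem poissonProbLT_le_succ_mul {k : ℕ} (hk : 0 < k) {r : ℝ} (hr : r ∈ Icc 0 (k : ℝ)) :
    poissonProbLT k r ≤ poissonProbLT (k + 1) ((k + 1) / k * r) := by
  obtain ⟨m, rfl⟩ := Nat.exists_eq_add_one_of_ne_zero hk.ne'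
  have hmed := poissonProbLT_self_le_succ (m + 1)
  push_cast at hr hmed ⊢
  generalize hKm : (m : ℝ) + 1 = K at hr hmed ⊢
  have hK : 0 < K := by rw [← hKm]; positivity
  set c : ℝ := (K + 1) / K with hc
  set w : ℝ → ℝ := fun t ↦ exp (-t) * t ^ m / m.factorial
  set g : ℝ → ℝ := fun t ↦ 1 - c ^ (m + 2) / K * (t * exp (-(t / K)))
  set F : ℝ → ℝ := fun t ↦ poissonProbLT (m + 1 + 1) (c * t) - poissonProbLT (m + 1) t
  have hF : ∀ t, HasDerivAt F (w t * g t) t := by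
    intro t
    have hexp : exp (-(c * t)) = exp (-t) * exp (-(t / K)) := by
      rw [← exp_add, hc]; congr 1; field_simp; ring
    have hfac : ((m + 1)! : ℝ) = K * m ! := by simp [← hKm, Nat.factorial_succ]
    refine (((hasDerivAt_poissonProbLT_succ (m + 1) (c * t)).comp t
      ((hasDerivAt_id' t).const_mul c)).sub (hasDerivAt_poissonProbLT_succ m t)).congr_deriv ?_
    simp only [w, g, hexp, hfac, mul_pow]
    field_simp
    ring
  have hw : ∀ t ∈ Icc 0 K, 0 ≤ w t := fun t ht ↦ by have := ht.1; positivity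
  have hg : AntitoneOn g (Icc 0 K) := fun x hx y hy hxy ↦ by
    have := monotoneOn_mul_exp_neg_div hK (Icc_subset_Iic_self hx) (Icc_subset_Iic_self hy) hxy
    simp only [g]
    gcongr
  have hF0 : F 0 = 0 := by simp [F, poissonProbLT_succ (m + 1)]
  have hFK : 0 ≤ F K := by
    have hcK : c * K = K + 1 := by rw [hc]; field_simp
    simp only [F, hcK]
    linarith
  have := min_le_of_hasDerivAt_mul_antitoneOn hF hw hg hr
  rw [hF0, min_eq_left hFK] at this
  exact sub_nonneg.1 this

theorem Qinv_nonneg (k : ℕ) (β : ℝ) : 0 ≤ Qinv k β :=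
  Real.sSup_nonneg fun _ hr ↦ hr.1.le

theorem le_Qinv {k : ℕ} {β r : ℝ} (hβ : 1 / 2 ≤ β) (hr : 0 < r) (h : β ≤ poissonProbLT k r) :
    r ≤ Qinv k β := by
  refine le_csSup ⟨k, fun s ⟨hs, hβs⟩ ↦ ?_⟩ ⟨hr, by rwa [Q_toNNReal_s10 hr.le]⟩
  rw [Q_toNNReal_s10 hs.le] at hβs
  exact le_of_half_le_poissonProbLT hs.le (hβ.trans hβs)

theorem Qinv_le {k : ℕ} {β a : ℝ} (ha : 0 ≤ a) (h : ∀ r, 0 < r → β ≤ poissonProbLT k r → r ≤ a) :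
    Qinv k β ≤ a :=
  Real.sSup_le (fun r ⟨hr, hβr⟩ ↦ h r hr (by rwa [Q_toNNReal_s10 hr.le] at hβr)) ha

theorem stmt10_general (β : ℝ) (hβ0 : 1 / 2 ≤ β) (k : ℕ) (hk : 2 ≤ k) :
    Qinv k β ≤ ((k : ℝ) / (k + 1)) * Qinv (k + 1) β := by
  have hk0 : 0 < k := by omega
  have hQ := Qinv_nonneg (k + 1) β
  refine Qinv_le (by positivity) fun r hr hβr ↦ ?_
  have hrk : r ≤ k := le_of_half_le_poissonProbLT hr.le (hβ0.trans hβr)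
  have hscaled : (k + 1) / k * r ≤ Qinv (k + 1) β := by
    refine le_Qinv hβ0 (by positivity) ?_
    exact_mod_cast hβr.trans (poissonProbLT_le_succ_mul hk0 ⟨hr.le, hrk⟩)
  calc r = k / (k + 1) * ((k + 1) / k * r) := by field_simp
    _ ≤ k / (k + 1) * Qinv (k + 1) β := by gcongr

/-- For `β ∈ [1/2, 1)` and `k ≥ 2`: `Q⁻¹(k, β) ≤ (k/(k+1))·Q⁻¹(k+1, β)`. -/
theorem stmt10 (β : ℝ) (hβ0 : 1 / 2 ≤ β) (hβ1 : β < 1) (k : ℕ) (hk : 2 ≤ k) :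
    Qinv k β ≤ ((k : ℝ) / (k + 1)) * Qinv (k + 1) β :=
  stmt10_general β hβ0 k hk
end

section
/- The inequality Q(k, λ) ≤ Q(k+1, (k+1)λ/k) holds for all integers k ≥ 2 and all 0 < λ ≤ k(k−1)/(k+1), where Q(k,λ) = Γ(k,λ)/Γ(k) = P(Poisson(λ) ≤ k−1). -/
open ProbabilityTheory
open scoped NNReal

/-!
Put `μ = (k+1)λ/k`. The Poisson distribution function `x ↦ Q(k, x)` has derivative
`-e^{-x} x^{k-1}/(k-1)!`, and `x ↦ e^{-x} x^{k-1}` increases on `[0, k-1]`, which contains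
`[λ, μ]` under the hypothesis on `λ`. By the mean value theorem
`Q(k, λ) - Q(k, μ) ≤ (μ - λ) e^{-μ} μ^{k-1}/(k-1)!`, and as `μ - λ = λ/k ≤ μ/k` this is at most
`e^{-μ} μ^k/k! = Q(k+1, μ) - Q(k, μ)`.
-/

open Real Finset
open scoped Nat

noncomputable def poissonTerm (n : ℕ) (x : ℝ) : ℝ := exp (-x) * x ^ n / n !

noncomputable def poissonCDF (k : ℕ) (x : ℝ) : ℝ := ∑ n ∈ range k, poissonTerm n x

lemma Q_eq_poissonCDF (k : ℕ) (r : ℝ≥0) : Q k r = poissonCDF k r := rfl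

lemma poissonTerm_nonneg (n : ℕ) {x : ℝ} (hx : 0 ≤ x) : 0 ≤ poissonTerm n x := by
  unfold poissonTerm; positivity

lemma poissonTerm_succ (n : ℕ) (x : ℝ) :
    poissonTerm (n + 1) x = poissonTerm n x * x / (n + 1) := by
  simp only [poissonTerm, Nat.factorial_succ, Nat.cast_mul, pow_succ]
  push_cast
  field_simp

lemma poissonCDF_succ (k : ℕ) (x : ℝ) :
    poissonCDF (k + 1) x = poissonCDF k x + poissonTerm k x :=
  sum_range_succ _ _

lemma hasDerivAt_poissonTerm_zero (x : ℝ) :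
    HasDerivAt (poissonTerm 0) (-poissonTerm 0 x) x := by
  have h : poissonTerm 0 = fun x => exp (-x) := by ext; simp [poissonTerm]
  simpa [h] using (hasDerivAt_neg x).exp

lemma hasDerivAt_poissonTerm_succ (n : ℕ) (x : ℝ) :
    HasDerivAt (poissonTerm (n + 1)) (poissonTerm n x - poissonTerm (n + 1) x) x := by
  have h : HasDerivAt (poissonTerm (n + 1)) _ x :=
    ((hasDerivAt_neg x).exp.mul (hasDerivAt_pow (n + 1) x)).div_const ((n + 1)! : ℝ)
  convert h using 1
  simp only [poissonTerm, Nat.factorial_succ, Nat.cast_mul, Nat.add_sub_cancel, pow_succ]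
  push_cast
  field_simp
  ring

lemma hasDerivAt_poissonCDF (k : ℕ) (x : ℝ) :
    HasDerivAt (poissonCDF (k + 1)) (-poissonTerm k x) x := by
  induction k with
  | zero =>
    have h : poissonCDF 1 = poissonTerm 0 := by ext; simp [poissonCDF]
    simpa [h] using hasDerivAt_poissonTerm_zero x
  | succ k ih =>
    rw [funext (poissonCDF_succ (k + 1))]
    exact (ih.add (hasDerivAt_poissonTerm_succ k x)).congr_deriv (by ring)

lemma monotoneOn_poissonTerm (n : ℕ) : MonotoneOn (poissonTerm n) (Set.Icc 0 n) := by
  cases n with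
  | zero => simp
  | succ n =>
    refine monotoneOn_of_hasDerivWithinAt_nonneg (convex_Icc _ _)
      (fun x _ => (hasDerivAt_poissonTerm_succ n x).continuousAt.continuousWithinAt)
      (fun x _ => (hasDerivAt_poissonTerm_succ n x).hasDerivWithinAt) fun x hx => ?_
    rw [interior_Icc] at hx
    have hx_le : x / (n + 1) ≤ 1 := by
      rw [div_le_one (by positivity)]; exact_mod_cast hx.2.le
    rw [sub_nonneg, poissonTerm_succ, mul_div_assoc]
    exact mul_le_of_le_one_right (poissonTerm_nonneg n hx.1.le) hx_le

lemma poissonCDF_sub_le {k : ℕ} {x y : ℝ} (hx : 0 ≤ x) (hxy : x ≤ y) (hy : y ≤ k) :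
    poissonCDF (k + 1) x - poissonCDF (k + 1) y ≤ (y - x) * poissonTerm k y := by
  have hdiff : Differentiable ℝ (poissonCDF (k + 1)) :=
    fun z => (hasDerivAt_poissonCDF k z).differentiableAt
  have hderiv :
      ∀ z ∈ interior (Set.Icc x y), -poissonTerm k y ≤ deriv (poissonCDF (k + 1)) z := by
    intro z hz
    rw [interior_Icc] at hz
    rw [(hasDerivAt_poissonCDF k z).deriv, neg_le_neg_iff]
    exact monotoneOn_poissonTerm k ⟨hx.trans hz.1.le, hz.2.le.trans hy⟩ ⟨hx.trans hxy, hy⟩ hz.2.le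
  have := (convex_Icc x y).mul_sub_le_image_sub_of_le_deriv hdiff.continuous.continuousOn
    hdiff.differentiableOn hderiv x (Set.left_mem_Icc.2 hxy) y (Set.right_mem_Icc.2 hxy) hxy
  linarith

theorem stmt14_general (k : ℕ) (hk : 2 ≤ k) (lam : ℝ≥0)
    (hlam : lam ≤ (k : ℝ≥0) * ((k : ℝ≥0) - 1) / ((k : ℝ≥0) + 1)) :
    Q k lam ≤ Q (k + 1) (((k : ℝ≥0) + 1) * lam / (k : ℝ≥0)) := by
  obtain ⟨j, rfl⟩ : ∃ j, k = j + 1 := ⟨k - 1, by omega⟩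
  set μ : ℝ≥0 := ((((j + 1 : ℕ) : ℝ≥0) + 1) * lam / ((j + 1 : ℕ) : ℝ≥0)) with hμ
  have hμ' : (μ : ℝ) = (j + 2) * lam / (j + 1) := by rw [hμ]; push_cast; ring
  have hlamR : (lam : ℝ) ≤ (j + 1) * j / (j + 1 + 1) := by
    have : (lam : ℝ) ≤ ((j + 1) * j / (j + 1 + 1) : ℝ≥0) := by
      simpa using NNReal.coe_le_coe.2 hlam
    exact_mod_cast this
  have hgap : (μ : ℝ) - lam = lam / (j + 1) := by rw [hμ']; field_simp; ring
  have hlam_le : (lam : ℝ) ≤ μ := by rw [← sub_nonneg, hgap]; positivity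
  have hμ_le : (μ : ℝ) ≤ j := by
    rw [hμ', div_le_iff₀ (by positivity)]
    rw [le_div_iff₀ (by positivity)] at hlamR
    linarith
  rw [Q_eq_poissonCDF, Q_eq_poissonCDF, poissonCDF_succ (j + 1)]
  have hterm_nonneg := poissonTerm_nonneg j μ.coe_nonneg
  calc poissonCDF (j + 1) lam
      ≤ poissonCDF (j + 1) μ + (μ - lam) * poissonTerm j μ :=
        sub_le_iff_le_add'.1 (poissonCDF_sub_le lam.coe_nonneg hlam_le hμ_le)
    _ = poissonCDF (j + 1) μ + poissonTerm j μ * lam / (j + 1) := by rw [hgap]; ring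
    _ ≤ poissonCDF (j + 1) μ + poissonTerm j μ * μ / (j + 1) := by gcongr
    _ = poissonCDF (j + 1) μ + poissonTerm (j + 1) μ := by rw [poissonTerm_succ]

/-- For `k ≥ 2` and `0 < λ ≤ k(k−1)/(k+1)`: `Q(k, λ) ≤ Q(k+1, (k+1)λ/k)`. -/
theorem stmt14 (k : ℕ) (hk : 2 ≤ k) (lam : ℝ≥0) (hlam0 : 0 < lam)
    (hlam : lam ≤ (k : ℝ≥0) * ((k : ℝ≥0) - 1) / ((k : ℝ≥0) + 1)) :
    Q k lam ≤ Q (k + 1) (((k : ℝ≥0) + 1) * lam / (k : ℝ≥0)) :=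
  stmt14_general k hk lam hlam
end

section
/- For 0 < α ≤ 1/4 there exist a constant c > 0 and n = c·α^{−1/2} (up to rounding) such that if X₁,...,X_n are i.i.d. Bernoulli(2α) variables, then P(Σ_{i=1}^n X_i ≤ 1) ≥ 1 − α. In particular, n = Ω(α^{−1/2}) i.i.d. Bernoulli(2α) items can be packed into a single bin of capacity 1 (counting each item as size 1) while keeping the overflow probability at most α. -/
open MeasureTheory
open scoped NNReal ENNReal

/-- `partSum f n` is the distribution of `S_n = Σ_{i<n} f i` for independent items. -/
noncomputable def partSum (f : ℕ → PMF ℝ) : ℕ → PMF ℝ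
  | 0 => PMF.pure 0
  | n + 1 => conv (partSum f n) (f n)

/-!
The sum of `n` independent `Ber(q)` variables exceeds `1` only if two of them equal `1`,
so it overflows with probability at most `(n q)²`. Conditioning on the last variable gives
`ℙ(S_{n+1} > 1) ≤ ℙ(S_n > 1) + q ℙ(S_n > 0)` and `ℙ(S_n > 0) ≤ n q`, which yields this bound
by induction. For `q = 2α` and `n = ⌈α^{-1/2} / 4⌉ ≤ α^{-1/2} / 2` it is at most `α`.
-/

lemma toMeasure_map_const_add_berS {p : ℝ} (hp : p ≤ 1) (s a : ℝ) {A : Set ℝ}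
    (hA : MeasurableSet A) :
    ((berS p hp s).map (a + ·)).toMeasure A =
      (1 - ENNReal.ofReal p) * A.indicator 1 a + ENNReal.ofReal p * A.indicator 1 (a + s) := by
  rw [PMF.toMeasure_map_apply _ _ _ (measurable_const_add a) hA, berS,
    PMF.toMeasure_map_apply _ _ _ measurable_from_top (measurable_const_add a hA),
    PMF.toMeasure_apply _ (by trivial), tsum_bool]
  by_cases h0 : a ∈ A <;> by_cases h1 : a + s ∈ A <;>
    simp [h0, h1, ENNReal.ofReal, PMF.bernoulli_apply]

lemma toMeasure_conv_berS (X : PMF ℝ) {p : ℝ} (hp : p ≤ 1) (s : ℝ) {A : Set ℝ}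
    (hA : MeasurableSet A) :
    (conv X (berS p hp s)).toMeasure A =
      (1 - ENNReal.ofReal p) * X.toMeasure A
        + ENNReal.ofReal p * X.toMeasure ((· + s) ⁻¹' A) := by
  have hA' : MeasurableSet ((· + s) ⁻¹' A) := measurable_add_const s hA
  have weighted (r : ℝ≥0∞) (B : Set ℝ) (hB : MeasurableSet B) :
      ∑' a, X a * (r * B.indicator 1 a) = r * X.toMeasure B := by
    rw [PMF.toMeasure_apply _ hB, ← ENNReal.tsum_mul_left]
    refine tsum_congr fun a => ?_
    by_cases h : a ∈ B <;> simp [h, mul_comm]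
  rw [conv, PMF.toMeasure_bind_apply _ _ _ hA, ← weighted _ _ hA, ← weighted _ _ hA',
    ← ENNReal.tsum_add]
  refine tsum_congr fun a => ?_
  rw [toMeasure_map_const_add_berS hp s a hA, mul_add]
  rfl

section Binomial

variable {p : ℝ} (hp : p ≤ 1)

lemma partSum_berS_Ioi_zero_le (n : ℕ) :
    (partSum (fun _ => berS p hp 1) n).toMeasure (Set.Ioi 0) ≤ n * ENNReal.ofReal p := by
  induction n with
  | zero => simp [partSum]
  | succ n ih =>
    rw [partSum, toMeasure_conv_berS _ hp _ measurableSet_Ioi]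
    calc (1 - ENNReal.ofReal p) * _ + ENNReal.ofReal p * _
        ≤ 1 * (n * ENNReal.ofReal p) + ENNReal.ofReal p * 1 := by
          gcongr
          · exact tsub_le_self
          · exact prob_le_one
      _ = (n + 1 : ℕ) * ENNReal.ofReal p := by push_cast; ring

lemma partSum_berS_Ioi_one_le (n : ℕ) :
    (partSum (fun _ => berS p hp 1) n).toMeasure (Set.Ioi 1) ≤ (n * ENNReal.ofReal p) ^ 2 := by
  induction n with
  | zero => simp [partSum]
  | succ n ih =>
    rw [partSum, toMeasure_conv_berS _ hp _ measurableSet_Ioi, Set.preimage_add_const_Ioi,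
      sub_self]
    calc (1 - ENNReal.ofReal p) * _ + ENNReal.ofReal p * _
        ≤ 1 * (n * ENNReal.ofReal p) ^ 2 + ENNReal.ofReal p * (n * ENNReal.ofReal p) := by
          gcongr
          · exact tsub_le_self
          · exact partSum_berS_Ioi_zero_le hp n
      _ = (n ^ 2 + n : ℕ) * ENNReal.ofReal p ^ 2 := by push_cast; ring
      _ ≤ ((n + 1) ^ 2 : ℕ) * ENNReal.ofReal p ^ 2 := by gcongr; nlinarith
      _ = ((n + 1 : ℕ) * ENNReal.ofReal p) ^ 2 := by push_cast; ring

end Binomial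

lemma two_mul_ceil_quarter_rpow_sq_le {α : ℝ} (hα₀ : 0 < α) (hα : α ≤ 1 / 4) :
    (2 * α * ⌈α ^ (-(1 : ℝ) / 2) / 4⌉₊) ^ 2 ≤ α := by
  set t := α ^ (-(1 : ℝ) / 2)
  have ht_sq : t ^ 2 * α = 1 := by
    rw [← Real.rpow_natCast, ← Real.rpow_mul hα₀.le]
    norm_num [Real.rpow_neg_one, hα₀.ne']
  have ht : 2 ≤ t := by
    have ht₀ : 0 ≤ t := Real.rpow_nonneg hα₀.le _
    nlinarith
  have hn : (⌈t / 4⌉₊ : ℝ) ≤ t / 2 := by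
    linarith [Nat.ceil_le_two_mul (a := t / 4) (by linarith)]
  calc (2 * α * ⌈t / 4⌉₊) ^ 2 ≤ (2 * α * (t / 2)) ^ 2 := by gcongr
    _ = α * (t ^ 2 * α) := by ring
    _ = α := by rw [ht_sq, mul_one]

/-- There is a constant `c > 0` such that for every `0 < α ≤ 1/4` there is
`n ≥ c·α^{−1/2}` for which the sum of `n` i.i.d. `Ber(2α)` variables satisfies
`ℙ(Σ Xᵢ ≤ 1) ≥ 1 − α`: i.e. `Ω(α^{−1/2})` such items fit in one bin. -/
theorem stmt15 :
    ∃ c : ℝ, 0 < c ∧ ∀ α : ℝ, 0 < α → α ≤ 1 / 4 →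
      ∃ n : ℕ, c * α ^ (-(1 : ℝ) / 2) ≤ (n : ℝ) ∧
        (∀ h2α : 2 * α ≤ 1,
          ENNReal.ofReal (1 - α) ≤
            (partSum (fun _ => berS (2 * α) h2α 1) n).toMeasure (Set.Iic 1)) := by
  refine ⟨1 / 4, by norm_num, fun α hα₀ hα => ?_⟩
  set n := ⌈α ^ (-(1 : ℝ) / 2) / 4⌉₊
  refine ⟨n, (one_div_mul_eq_div _ _).trans_le (Nat.le_ceil _), fun h2α => ?_⟩
  have h_overflow :
      (partSum (fun _ => berS (2 * α) h2α 1) n).toMeasure (Set.Ioi 1) ≤ ENNReal.ofReal α :=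
    calc _ ≤ (n * ENNReal.ofReal (2 * α)) ^ 2 := partSum_berS_Ioi_one_le h2α n
      _ = ENNReal.ofReal ((2 * α * n) ^ 2) := by
        rw [ENNReal.ofReal_pow (by positivity), ENNReal.ofReal_mul' (Nat.cast_nonneg n),
          ENNReal.ofReal_natCast, mul_comm]
      _ ≤ ENNReal.ofReal α := ENNReal.ofReal_le_ofReal (two_mul_ceil_quarter_rpow_sq_le hα₀ hα)
  rw [← Set.compl_Ioi, prob_compl_eq_one_sub measurableSet_Ioi,
    ENNReal.ofReal_sub _ hα₀.le, ENNReal.ofReal_one]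
  gcongr
end

section
/- Let C(X) = Σ_{x∈[0,1]}(1−x)P(X = x) for a finitely-supported nonnegative random variable X. If S is finitely supported and X ~ Ber(p,s) is independent of S with 0 < s ≤ 1, then C(S + X) = C(S) − p·Σ_{x∈(1−s,1]}(1−x)P(S = x) − p·s·P(S ∈ [0, 1−s]). -/
/-!
Conditioning on the Bernoulli variable gives `C(S + X) = (1 - p) C(S) + p C(S + s)`. Because `S`
and `s` are nonnegative, shifting by `s` turns the weight `1 - x` on `[0, 1]` into `(1 - x) - s` on
`[0, 1 - s]` and into `0` on `(1 - s, 1]`, so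
`C(S + s) = C(S) - Σ_{x ∈ (1-s,1]} (1 - x) ℙ(S = x) - s ℙ(S ∈ [0, 1 - s])`.
-/

open MeasureTheory
open scoped NNReal ENNReal

/-- Discount function `C(X) = Σ_{x ∈ [0,1]} (1 − x)·ℙ(X = x)`. -/
noncomputable def C (X : PMF ℝ) : ℝ :=
  ∑' x : ℝ, if x ∈ Set.Icc (0 : ℝ) 1 then (1 - x) * (X x).toReal else 0

open Set

namespace PMF

variable {α : Type*}

theorem summable_mul_toReal (X : PMF α) {w : α → ℝ} {B : ℝ} (hw : ∀ x, |w x| ≤ B) :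
    Summable fun x => w x * (X x).toReal :=
  ((ENNReal.summable_toReal X.tsum_coe_ne_top).mul_left B).of_norm_bounded fun x => by
    rw [norm_mul, Real.norm_eq_abs, Real.norm_eq_abs, abs_of_nonneg ENNReal.toReal_nonneg]
    exact mul_le_mul_of_nonneg_right (hw x) ENNReal.toReal_nonneg

theorem toMeasure_toReal_eq_tsum [MeasurableSpace α] [MeasurableSingletonClass α]
    (X : PMF α) (A : Set α) :
    (X.toMeasure A).toReal = ∑' x, A.indicator 1 x * (X x).toReal := by
  rw [toMeasure_apply_eq_tsum, ENNReal.tsum_toReal_eq fun x => ?_]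
  · refine tsum_congr fun x => ?_
    by_cases hx : x ∈ A <;> simp [hx]
  · by_cases hx : x ∈ A <;> simp [hx, X.apply_ne_top]

end PMF

theorem abs_indicator_le {α : Type*} {A : Set α} {f : α → ℝ} {B : ℝ}
    (hf : ∀ x ∈ A, |f x| ≤ B) (x : α) : |A.indicator f x| ≤ |B| := by
  by_cases hx : x ∈ A
  · simpa [hx] using (hf x hx).trans (le_abs_self B)
  · simp [hx]

theorem ite_mem_mul_eq_indicator_mul {α : Type*} (A : Set α) [DecidablePred (· ∈ A)]
    (f : α → ℝ) (x : α) (y : ℝ) :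
    (if x ∈ A then f x * y else 0) = A.indicator f x * y := by
  by_cases hx : x ∈ A <;> simp [hx]

noncomputable def discountWeight : ℝ → ℝ := (Icc 0 1).indicator fun y => 1 - y

theorem abs_discountWeight_le (x : ℝ) : |discountWeight x| ≤ |1| :=
  abs_indicator_le (fun _ hy => abs_le.mpr ⟨by linarith [hy.2], by linarith [hy.1]⟩) x

theorem C_eq_tsum_discountWeight_mul (X : PMF ℝ) :
    C X = ∑' x, discountWeight x * (X x).toReal :=
  tsum_congr fun x => ite_mem_mul_eq_indicator_mul _ (fun y => 1 - y) x _

theorem discountWeight_add_of_nonneg {s x : ℝ} (hs : 0 ≤ s) (hx : 0 ≤ x) :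
    discountWeight (x + s)
      = discountWeight x - (Ioc (1 - s) 1).indicator (fun y => 1 - y) x
        - s * (Icc 0 (1 - s)).indicator 1 x := by
  simp only [discountWeight, indicator_apply, mem_Icc, mem_Ioc, Pi.one_apply]
  split_ifs <;> grind

theorem berS_apply (p : ℝ) (hp : p ≤ 1) (s x : ℝ) :
    berS p hp s x = (if x = s then ENNReal.ofReal p else 0)
      + (if x = 0 then 1 - ENNReal.ofReal p else 0) := by
  rw [berS, PMF.map_apply, tsum_bool]
  simp only [PMF.bernoulli_apply, Bool.cond_true, Bool.cond_false, if_true, if_false,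
    Bool.false_eq_true]
  rw [add_comm, ENNReal.coe_sub, ENNReal.coe_one]
  rfl

theorem conv_apply (X Y : PMF ℝ) (x : ℝ) : conv X Y x = ∑' a, X a * Y (x - a) := by
  rw [conv, PMF.bind_apply]
  refine tsum_congr fun a => congrArg _ ?_
  rw [PMF.map_apply, tsum_eq_single (x - a)]
  · simp
  · intro b hb
    rw [if_neg fun hxab => hb (by linarith)]

theorem conv_berS_apply (S : PMF ℝ) (p : ℝ) (hp : p ≤ 1) (s x : ℝ) :
    conv S (berS p hp s) x = S (x - s) * ENNReal.ofReal p + S x * (1 - ENNReal.ofReal p) := by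
  have hsub : ∀ c a : ℝ, x - a = c ↔ a = x - c := fun c a => by
    constructor <;> intro <;> linarith
  simp only [conv_apply, berS_apply, mul_add, mul_ite, mul_zero, hsub, sub_zero]
  rw [ENNReal.tsum_add]
  simp

theorem conv_berS_apply_toReal (S : PMF ℝ) {p : ℝ} (hp0 : 0 ≤ p) (hp : p ≤ 1) (s x : ℝ) :
    (conv S (berS p hp s) x).toReal = (1 - p) * (S x).toReal + p * (S (x - s)).toReal := by
  have hq : ENNReal.ofReal p ≤ 1 := ENNReal.ofReal_le_one.mpr hp
  rw [conv_berS_apply,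
    ENNReal.toReal_add (ENNReal.mul_ne_top (S.apply_ne_top _) ENNReal.ofReal_ne_top)
      (ENNReal.mul_ne_top (S.apply_ne_top _) (by simp)),
    ENNReal.toReal_mul, ENNReal.toReal_mul, ENNReal.toReal_sub_of_le hq ENNReal.one_ne_top,
    ENNReal.toReal_ofReal hp0, ENNReal.toReal_one]
  ring

theorem tsum_mul_conv_berS_toReal (S : PMF ℝ) {p : ℝ} (hp0 : 0 ≤ p) (hp : p ≤ 1) (s : ℝ)
    {w : ℝ → ℝ} {B : ℝ} (hw : ∀ x, |w x| ≤ B) :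
    ∑' x, w x * (conv S (berS p hp s) x).toReal
      = (1 - p) * ∑' x, w x * (S x).toReal + p * ∑' x, w (x + s) * (S x).toReal := by
  have hshift : ∑' x, w x * (S (x - s)).toReal = ∑' x, w (x + s) * (S x).toReal := by
    rw [← (Equiv.addRight s).tsum_eq]
    simp
  have hsum : Summable fun x => w x * (S (x - s)).toReal := by
    rw [← (Equiv.addRight s).summable_iff]
    simpa [Function.comp_def] using S.summable_mul_toReal fun x => hw (x + s)
  simp_rw [conv_berS_apply_toReal S hp0 hp, mul_add, mul_left_comm (w _)]
  rw [((S.summable_mul_toReal hw).mul_left _).tsum_add (hsum.mul_left _), tsum_mul_left,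
    tsum_mul_left, hshift]

theorem tsum_discountWeight_add_mul_toReal (S : PMF ℝ) (hnn : ∀ x ∈ S.support, 0 ≤ x)
    {s : ℝ} (hs : 0 ≤ s) :
    ∑' x, discountWeight (x + s) * (S x).toReal
      = ∑' x, discountWeight x * (S x).toReal
        - ∑' x, (Ioc (1 - s) 1).indicator (fun y => 1 - y) x * (S x).toReal
        - s * ∑' x, (Icc 0 (1 - s)).indicator 1 x * (S x).toReal := by
  have h₁ := S.summable_mul_toReal abs_discountWeight_le
  have h₂ := S.summable_mul_toReal <| abs_indicator_le (A := Ioc (1 - s) 1) (f := fun y => 1 - y)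
    (B := s) fun y hy => abs_le.mpr ⟨by linarith [hy.2], by linarith [hy.1]⟩
  have h₃ := S.summable_mul_toReal <| abs_indicator_le (A := Icc 0 (1 - s)) (f := 1)
    (B := 1) fun y _ => by simp
  rw [← tsum_mul_left, ← h₁.tsum_sub h₂, ← (h₁.sub h₂).tsum_sub (h₃.mul_left s)]
  refine tsum_congr fun x => ?_
  by_cases hx : x ∈ S.support
  · rw [discountWeight_add_of_nonneg hs (hnn x hx)]
    ring
  · simp [(S.apply_eq_zero_iff x).mpr hx]

theorem stmt18_general (S : PMF ℝ) (hnn : ∀ x ∈ S.support, 0 ≤ x)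
    (p s : ℝ) (hp0 : 0 ≤ p) (hp1 : p ≤ 1) (hs0 : 0 < s) :
    C (conv S (berS p hp1 s)) =
      C S - p * (∑' x : ℝ, if x ∈ Set.Ioc (1 - s) 1 then (1 - x) * (S x).toReal else 0)
        - p * s * (S.toMeasure (Set.Icc 0 (1 - s))).toReal := by
  rw [C_eq_tsum_discountWeight_mul, C_eq_tsum_discountWeight_mul,
    tsum_congr fun x => ite_mem_mul_eq_indicator_mul _ (fun y => 1 - y) x _,
    tsum_mul_conv_berS_toReal S hp0 hp1 s abs_discountWeight_le, S.toMeasure_toReal_eq_tsum,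
    tsum_discountWeight_add_mul_toReal S hnn hs0.le]
  ring

/-- If `X ~ Ber(p, s)` with `0 < s ≤ 1` is independent of a finitely-supported
nonnegative `S`, then
`C(S + X) = C(S) − p·Σ_{x ∈ (1−s,1]}(1−x)ℙ(S = x) − p·s·ℙ(S ∈ [0, 1−s])`. -/
theorem stmt18 (S : PMF ℝ) (hfin : S.support.Finite) (hnn : ∀ x ∈ S.support, 0 ≤ x)
    (p s : ℝ) (hp0 : 0 ≤ p) (hp1 : p ≤ 1) (hs0 : 0 < s) (hs1 : s ≤ 1) :
    C (conv S (berS p hp1 s)) =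
      C S - p * (∑' x : ℝ, if x ∈ Set.Ioc (1 - s) 1 then (1 - x) * (S x).toReal else 0)
        - p * s * (S.toMeasure (Set.Icc 0 (1 - s))).toReal :=
  stmt18_general S hnn p s hp0 hp1 hs0
end
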